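/- arXiv:2510.00260 — 4 statements merged into one kernel-verified Lean document; each statement's English description precedes it below -/
import Mathlib

section
/- Let μ be a probability measure on a measurable space X, κ a Markov kernel from X to a measurable space Z, and let q_agg := μ.bind κ (the aggregate posterior, i.e. the mixture of the measures κ x under μ). Then for every probability measure p on Z, the average posterior-to-prior divergence decomposes as ∫ KL(κ x ‖ p) dμ(x) = ∫ KL(κ x ‖ q_agg) dμ(x) + KL(q_agg ‖ p), as an identity in the extended nonnegative reals. -/
/-!
Write `q = μ.bind κ`. When `κ x ≪ q ≪ p`, the log-likelihood ratios add up,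
`llr (κ x) p = llr (κ x) q + llr q p`, and integrating `llr q p` over `κ x` and then over `μ`
gives `KL(q ‖ p)`. To get an identity in `ℝ≥0∞` with no integrability assumptions, split every
log-likelihood ratio into its positive and negative parts. The negative part of `llr ρ σ` has
`ρ`-integral at most `σ univ`, because `-log t ≤ 1 / t`, so these parts can be cancelled.
The condition `κ x ≪ q` can fail for every `x` (Dirac kernels, atomless `q`), but it holds for
`μ`-a.e. `x` with `κ x ≪ p`: the set `{dq/dp = 0}` is `q`-null, hence `κ x`-null for a.e. `x`,
and off it `p` and `q` have the same null sets. When `κ x ≪ p` fails, both sides are `∞`.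
-/

open MeasureTheory ProbabilityTheory
open scoped ENNReal

open Classical in
/-- Kullback–Leibler divergence: `∫ log (dq/dp) dq` if `q ≪ p` and the log-density
is `q`-integrable, and `∞` otherwise. -/
noncomputable def klDiv {Z : Type*} [MeasurableSpace Z] (q p : Measure Z) : ℝ≥0∞ :=
  if q ≪ p ∧ Integrable (llr q p) q then ENNReal.ofReal (∫ z, llr q p z ∂q) else ⊤

theorem klDiv_eq_informationTheory_klDiv {Z : Type*} [MeasurableSpace Z] {q p : Measure Z}
    (h : q Set.univ = p Set.univ) : klDiv q p = InformationTheory.klDiv q p := by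
  rw [klDiv, InformationTheory.klDiv_def, measureReal_def, measureReal_def, h]
  simp

theorem ENNReal.ofReal_add_ofReal_neg_add_ofReal_neg {a b c : ℝ} (h : c = a + b) :
    ENNReal.ofReal c + ENNReal.ofReal (-a) + ENNReal.ofReal (-b)
      = ENNReal.ofReal a + ENNReal.ofReal b + ENNReal.ofReal (-c) := by
  have key : max c 0 + max (-a) 0 + max (-b) 0 = max a 0 + max b 0 + max (-c) 0 := by
    linarith [max_zero_sub_max_neg_zero_eq_self a, max_zero_sub_max_neg_zero_eq_self b,
      max_zero_sub_max_neg_zero_eq_self c]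
  simpa [ENNReal.ofReal_add, add_nonneg, ENNReal.ofReal_max] using congrArg ENNReal.ofReal key

namespace MeasureTheory

variable {α : Type*} [MeasurableSpace α]

theorem integrable_of_lintegral_ofReal_ne_top {μ : Measure α} {f : α → ℝ}
    (hf : AEStronglyMeasurable f μ) (hpos : ∫⁻ a, ENNReal.ofReal (f a) ∂μ ≠ ∞)
    (hneg : ∫⁻ a, ENNReal.ofReal (-f a) ∂μ ≠ ∞) : Integrable f μ := by
  have hpos' : Integrable (fun a ↦ max (f a) 0) μ :=
    (lintegral_ofReal_ne_top_iff_integrable (by fun_prop)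
      (ae_of_all _ fun _ ↦ le_max_right _ _)).1 (by simpa [ENNReal.ofReal_max] using hpos)
  have hneg' : Integrable (fun a ↦ max (-f a) 0) μ :=
    (lintegral_ofReal_ne_top_iff_integrable (by fun_prop)
      (ae_of_all _ fun _ ↦ le_max_right _ _)).1 (by simpa [ENNReal.ofReal_max] using hneg)
  exact (hpos'.sub hneg').congr (ae_of_all _ fun a ↦ max_zero_sub_max_neg_zero_eq_self (f a))

theorem Measure.absolutelyContinuous_of_ae_rnDeriv_pos {ρ q p : Measure α}
    [q.HaveLebesgueDecomposition p] [SFinite p] (hρp : ρ ≪ p) (hqp : q ≪ p)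
    (hpos : ∀ᵐ z ∂ρ, 0 < q.rnDeriv p z) : ρ ≪ q := by
  refine Measure.AbsolutelyContinuous.mk fun A hA hqA ↦ ?_
  have hzero : ∀ᵐ z ∂p, z ∈ A → q.rnDeriv p z = 0 :=
    (setLIntegral_eq_zero_iff hA (Measure.measurable_rnDeriv q p)).1
      (by rwa [Measure.setLIntegral_rnDeriv hqp])
  rw [measure_eq_zero_iff_ae_notMem]
  filter_upwards [hρp.ae_le hzero, hpos] with z hz hz_pos hzA using hz_pos.ne' (hz hzA)

theorem llr_add_llr {ρ q p : Measure α} [SigmaFinite ρ] [SigmaFinite q] [SigmaFinite p]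
    (hρq : ρ ≪ q) (hqp : q ≪ p) : llr ρ q + llr q p =ᵐ[ρ] llr ρ p := by
  have hρp : ρ ≪ p := hρq.trans hqp
  filter_upwards [hρp.ae_le (Measure.rnDeriv_mul_rnDeriv hρq), Measure.rnDeriv_pos hρq,
    hρq.ae_le (Measure.rnDeriv_lt_top ρ q), hρq.ae_le (Measure.rnDeriv_pos hqp),
    hρp.ae_le (Measure.rnDeriv_lt_top q p)] with z hz hρq_pos hρq_lt hqp_pos hqp_lt
  rw [Pi.add_apply, llr, llr, llr, ← hz, Pi.mul_apply, ENNReal.toReal_mul,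
    Real.log_mul (ENNReal.toReal_pos hρq_pos.ne' hρq_lt.ne).ne'
      (ENNReal.toReal_pos hqp_pos.ne' hqp_lt.ne).ne']

end MeasureTheory

namespace ProbabilityTheory

variable {X Z : Type*} [MeasurableSpace X] [MeasurableSpace Z]

theorem ae_absolutelyContinuous_bind_of_absolutelyContinuous {μ : Measure X} {κ : Kernel X Z}
    {p : Measure Z} [SigmaFinite (μ.bind κ)] [SigmaFinite p] (h : μ.bind κ ≪ p) :
    ∀ᵐ x ∂μ, κ x ≪ p → κ x ≪ μ.bind κ := by
  filter_upwards [Measure.ae_ae_of_ae_comp (Measure.rnDeriv_pos h)] with x hx hxp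
  exact Measure.absolutelyContinuous_of_ae_rnDeriv_pos hxp h hx

end ProbabilityTheory

namespace InformationTheory

-- Here `klDiv` is Mathlib's `InformationTheory.klDiv`, not the `klDiv` defined above.

variable {X Z : Type*} [MeasurableSpace X] [MeasurableSpace Z]

theorem lintegral_ofReal_neg_llr_le {ρ σ : Measure Z} [SigmaFinite ρ] [SigmaFinite σ]
    (h : ρ ≪ σ) : ∫⁻ z, ENNReal.ofReal (-llr ρ σ z) ∂ρ ≤ σ Set.univ :=
  calc ∫⁻ z, ENNReal.ofReal (-llr ρ σ z) ∂ρ = ∫⁻ z, ENNReal.ofReal (llr σ ρ z) ∂ρ :=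
        lintegral_congr_ae (by filter_upwards [neg_llr h] with z hz using by rw [← hz]; rfl)
    _ ≤ ∫⁻ z, σ.rnDeriv ρ z ∂ρ := lintegral_mono fun z ↦
        (ENNReal.ofReal_le_ofReal (Real.log_le_self ENNReal.toReal_nonneg)).trans
          ENNReal.ofReal_toReal_le
    _ ≤ σ Set.univ := Measure.lintegral_rnDeriv_le

section ProbabilityMeasures

variable {ρ q p : Measure Z} [IsProbabilityMeasure ρ] [IsProbabilityMeasure q]
  [IsProbabilityMeasure p]

theorem lintegral_ofReal_neg_llr_ne_top (h : ρ ≪ q) :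
    ∫⁻ z, ENNReal.ofReal (-llr ρ q z) ∂ρ ≠ ∞ :=
  ((lintegral_ofReal_neg_llr_le h).trans_lt (measure_lt_top q _)).ne

theorem klDiv_add_lintegral_ofReal_neg_llr (h : ρ ≪ q) :
    klDiv ρ q + ∫⁻ z, ENNReal.ofReal (-llr ρ q z) ∂ρ = ∫⁻ z, ENNReal.ofReal (llr ρ q z) ∂ρ := by
  have hneg := lintegral_ofReal_neg_llr_ne_top h
  by_cases hint : Integrable (llr ρ q) ρ
  · have hpos := hint.lintegral_lt_top.ne
    have hle : ∫⁻ z, ENNReal.ofReal (-llr ρ q z) ∂ρ ≤ ∫⁻ z, ENNReal.ofReal (llr ρ q z) ∂ρ := by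
      have hnonneg : 0 ≤ ∫ z, llr ρ q z ∂ρ := by
        simpa using integral_llr_add_sub_measure_univ_nonneg h hint
      rwa [integral_eq_lintegral_pos_part_sub_lintegral_neg_part hint, sub_nonneg,
        ENNReal.toReal_le_toReal hneg hpos] at hnonneg
    rw [klDiv_of_ac_of_integrable h hint,
      integral_eq_lintegral_pos_part_sub_lintegral_neg_part hint]
    simp [ENNReal.ofReal_sub, ENNReal.ofReal_toReal hpos, ENNReal.ofReal_toReal hneg,
      tsub_add_cancel_of_le hle]
  · rw [klDiv_of_not_integrable hint, top_add, eq_comm]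
    by_contra hpos
    exact hint (integrable_of_lintegral_ofReal_ne_top
      (measurable_llr ρ q).aestronglyMeasurable hpos hneg)

theorem klDiv_add_lintegral_ofReal_neg_llr_of_ac_of_ac (hρq : ρ ≪ q) (hqp : q ≪ p) :
    klDiv ρ p + ∫⁻ z, ENNReal.ofReal (-llr q p z) ∂ρ
      = klDiv ρ q + ∫⁻ z, ENNReal.ofReal (llr q p z) ∂ρ := by
  have hρp := hρq.trans hqp
  set negρq := ∫⁻ z, ENNReal.ofReal (-llr ρ q z) ∂ρ
  set negρp := ∫⁻ z, ENNReal.ofReal (-llr ρ p z) ∂ρ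
  have hfinite : negρq + negρp ≠ ∞ := ENNReal.add_ne_top.2
    ⟨lintegral_ofReal_neg_llr_ne_top hρq, lintegral_ofReal_neg_llr_ne_top hρp⟩
  have hsplit : ∀ᵐ z ∂ρ, ENNReal.ofReal (llr ρ p z) + ENNReal.ofReal (-llr ρ q z)
      + ENNReal.ofReal (-llr q p z) = ENNReal.ofReal (llr ρ q z) + ENNReal.ofReal (llr q p z)
      + ENNReal.ofReal (-llr ρ p z) := by
    filter_upwards [llr_add_llr hρq hqp] with z hz
    exact ENNReal.ofReal_add_ofReal_neg_add_ofReal_neg hz.symm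
  rw [← ENNReal.add_left_inj hfinite]
  calc klDiv ρ p + ∫⁻ z, ENNReal.ofReal (-llr q p z) ∂ρ + (negρq + negρp)
      = (klDiv ρ p + negρp) + negρq + ∫⁻ z, ENNReal.ofReal (-llr q p z) ∂ρ := by ring
    _ = ∫⁻ z, (ENNReal.ofReal (llr ρ p z) + ENNReal.ofReal (-llr ρ q z)
          + ENNReal.ofReal (-llr q p z)) ∂ρ := by
        rw [klDiv_add_lintegral_ofReal_neg_llr hρp, lintegral_add_left, lintegral_add_left]
        all_goals fun_prop (disch := exact measurable_llr _ _)
    _ = ∫⁻ z, (ENNReal.ofReal (llr ρ q z) + ENNReal.ofReal (llr q p z)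
          + ENNReal.ofReal (-llr ρ p z)) ∂ρ := lintegral_congr_ae hsplit
    _ = (klDiv ρ q + negρq) + ∫⁻ z, ENNReal.ofReal (llr q p z) ∂ρ + negρp := by
        rw [klDiv_add_lintegral_ofReal_neg_llr hρq, lintegral_add_left, lintegral_add_left]
        all_goals fun_prop (disch := exact measurable_llr _ _)
    _ = klDiv ρ q + ∫⁻ z, ENNReal.ofReal (llr q p z) ∂ρ + (negρq + negρp) := by ring

end ProbabilityMeasures

theorem top_mul_le_klDiv {μ ν : Measure Z} {s : Set Z} (hs : ν s = 0) : ∞ * μ s ≤ klDiv μ ν := by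
  by_cases hμs : μ s = 0
  · simp [hμs]
  · rw [klDiv_of_not_ac fun h ↦ hμs (h hs)]
    exact le_top

theorem lintegral_klDiv_eq_top_of_not_absolutelyContinuous_bind {μ : Measure X}
    {κ : Kernel X Z} [IsMarkovKernel κ] {p : Measure Z} (h : ¬ μ.bind κ ≪ p) :
    ∫⁻ x, klDiv (κ x) p ∂μ = ∞ := by
  obtain ⟨s, hs, hps, hqs⟩ : ∃ s, MeasurableSet s ∧ p s = 0 ∧ μ.bind κ s ≠ 0 := by
    by_contra! h'
    exact h (Measure.AbsolutelyContinuous.mk h')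
  refine eq_top_iff.2 ?_
  calc ∞ = ∞ * μ.bind κ s := (ENNReal.top_mul hqs).symm
    _ = ∫⁻ x, ∞ * κ x s ∂μ := by
      rw [Measure.bind_apply hs κ.aemeasurable, lintegral_const_mul _ (κ.measurable_coe hs)]
    _ ≤ ∫⁻ x, klDiv (κ x) p ∂μ := lintegral_mono fun x ↦ top_mul_le_klDiv hps

theorem lintegral_klDiv_bind_eq_add (μ : Measure X) [IsProbabilityMeasure μ] (κ : Kernel X Z)
    [IsMarkovKernel κ] (p : Measure Z) [IsProbabilityMeasure p] :
    ∫⁻ x, klDiv (κ x) p ∂μ = ∫⁻ x, klDiv (κ x) (μ.bind κ) ∂μ + klDiv (μ.bind κ) p := by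
  by_cases hqp : μ.bind κ ≪ p
  swap
  · rw [lintegral_klDiv_eq_top_of_not_absolutelyContinuous_bind hqp, klDiv_of_not_ac hqp,
      add_top]
  set q := μ.bind κ
  have hpointwise : ∀ᵐ x ∂μ, klDiv (κ x) p + ∫⁻ z, ENNReal.ofReal (-llr q p z) ∂κ x
      = klDiv (κ x) q + ∫⁻ z, ENNReal.ofReal (llr q p z) ∂κ x := by
    filter_upwards [ae_absolutelyContinuous_bind_of_absolutelyContinuous hqp] with x hx
    by_cases hxp : κ x ≪ p
    · exact klDiv_add_lintegral_ofReal_neg_llr_of_ac_of_ac (hx hxp) hqp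
    · simp [klDiv_of_not_ac hxp, klDiv_of_not_ac fun h ↦ hxp (h.trans hqp)]
  have hintegrated : ∫⁻ x, klDiv (κ x) p ∂μ + ∫⁻ z, ENNReal.ofReal (-llr q p z) ∂q
      = ∫⁻ x, klDiv (κ x) q ∂μ + ∫⁻ z, ENNReal.ofReal (llr q p z) ∂q := by
    rw [Measure.lintegral_bind κ.aemeasurable (by fun_prop (disch := exact measurable_llr _ _)),
      Measure.lintegral_bind κ.aemeasurable (by fun_prop (disch := exact measurable_llr _ _)),
      ← lintegral_add_right _ (by fun_prop (disch := exact measurable_llr _ _)),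
      ← lintegral_add_right _ (by fun_prop (disch := exact measurable_llr _ _))]
    exact lintegral_congr_ae hpointwise
  rw [← ENNReal.add_left_inj (lintegral_ofReal_neg_llr_ne_top hqp), hintegrated, add_assoc,
    klDiv_add_lintegral_ofReal_neg_llr hqp]

end InformationTheory

/-- For a probability measure `μ` on `X`, a Markov kernel `κ` from `X` to `Z`, and the
aggregate posterior `q_agg = μ.bind κ`, for every probability measure `p` on `Z`:
`∫ KL(κ x ‖ p) dμ(x) = ∫ KL(κ x ‖ q_agg) dμ(x) + KL(q_agg ‖ p)` in `ℝ≥0∞`. -/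
theorem avg_klDiv_decomposition {X Z : Type*} [MeasurableSpace X] [MeasurableSpace Z]
    (μ : Measure X) [IsProbabilityMeasure μ] (κ : ProbabilityTheory.Kernel X Z)
    [ProbabilityTheory.IsMarkovKernel κ] (p : Measure Z) [IsProbabilityMeasure p] :
    ∫⁻ x, klDiv (κ x) p ∂μ = ∫⁻ x, klDiv (κ x) (μ.bind κ) ∂μ + klDiv (μ.bind κ) p := by
  simpa only [klDiv_eq_informationTheory_klDiv, measure_univ] using
    InformationTheory.lintegral_klDiv_bind_eq_add μ κ p
end

section
/- Let μ be a probability measure on X, κ a Markov kernel from X to Z, q_agg := μ.bind κ, and suppose ∫ KL(κ x ‖ q_agg) dμ(x) < ∞. Then for every probability measure p on Z, ∫ KL(κ x ‖ p) dμ(x) ≥ ∫ KL(κ x ‖ q_agg) dμ(x), with equality if and only if p = q_agg. Consequently, the VAE prior that maximizes the expected ELBO (whose only p-dependent term is −∫ KL(κ x ‖ p) dμ(x)) is uniquely the aggregate posterior q_agg, and the optimality gap for any other prior p equals KL(q_agg ‖ p). -/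
open MeasureTheory ProbabilityTheory
open scoped ENNReal

section GeneralKL

variable {Z : Type*} [MeasurableSpace Z]

lemma ENNReal.ofReal_add_ofReal_neg_add {u v w : ℝ} (h : u = v + w) :
    ENNReal.ofReal u + ENNReal.ofReal (-v) + ENNReal.ofReal (-w)
      = ENNReal.ofReal (-u) + ENNReal.ofReal v + ENNReal.ofReal w := by
  rw [← ENNReal.toReal_eq_toReal_iff' (by finiteness) (by finiteness)]
  simp only [ENNReal.toReal_add, ENNReal.add_ne_top, ENNReal.ofReal_ne_top, ne_eq,
    not_false_eq_true, and_self, ENNReal.toReal_ofReal', max_def]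
  split_ifs <;> linarith

lemma Real.enorm_eq_ofReal_add_ofReal_neg (x : ℝ) :
    ‖x‖ₑ = ENNReal.ofReal x + ENNReal.ofReal (-x) := by
  rcases le_total x 0 with h | h
  · simp [Real.enorm_eq_ofReal_abs, abs_of_nonpos h, ENNReal.ofReal_of_nonpos h]
  · simp [Real.enorm_eq_ofReal_abs, abs_of_nonneg h, ENNReal.ofReal_of_nonpos (neg_nonpos.2 h)]

lemma MeasureTheory.lintegral_ofReal_add_lintegral_ofReal_neg_of_ae_eq_add {μ : Measure Z}
    {f g h : Z → ℝ} (hf : Measurable f) (hg : Measurable g)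
    (hfgh : ∀ᵐ z ∂μ, f z = g z + h z) :
    ∫⁻ z, ENNReal.ofReal (f z) ∂μ + ∫⁻ z, ENNReal.ofReal (-g z) ∂μ
        + ∫⁻ z, ENNReal.ofReal (-h z) ∂μ
      = ∫⁻ z, ENNReal.ofReal (-f z) ∂μ + ∫⁻ z, ENNReal.ofReal (g z) ∂μ
        + ∫⁻ z, ENNReal.ofReal (h z) ∂μ := by
  rw [← lintegral_add_left (f := fun z => ENNReal.ofReal (f z)) (by fun_prop),
    ← lintegral_add_left (f := fun z => ENNReal.ofReal (f z) + ENNReal.ofReal (-g z))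
      (by fun_prop),
    ← lintegral_add_left (f := fun z => ENNReal.ofReal (-f z)) (by fun_prop),
    ← lintegral_add_left (f := fun z => ENNReal.ofReal (-f z) + ENNReal.ofReal (g z))
      (by fun_prop)]
  exact lintegral_congr_ae (hfgh.mono fun z hz => ENNReal.ofReal_add_ofReal_neg_add hz)

lemma MeasureTheory.integrable_of_lintegral_ofReal_ne_top_s1 {μ : Measure Z} {f : Z → ℝ}
    (hf : Measurable f) (hpos : ∫⁻ z, ENNReal.ofReal (f z) ∂μ ≠ ⊤)
    (hneg : ∫⁻ z, ENNReal.ofReal (-f z) ∂μ ≠ ⊤) : Integrable f μ := by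
  refine ⟨hf.aestronglyMeasurable, ?_⟩
  simp_rw [HasFiniteIntegral, Real.enorm_eq_ofReal_add_ofReal_neg,
    lintegral_add_left hf.ennreal_ofReal]
  exact ENNReal.add_lt_top.2 ⟨hpos.lt_top, hneg.lt_top⟩

lemma klDiv_eq_informationTheory_klDiv_s1 (a b : Measure Z) [IsProbabilityMeasure a]
    [IsProbabilityMeasure b] : klDiv a b = InformationTheory.klDiv a b := by
  by_cases h : a ≪ b ∧ Integrable (llr a b) a
  · simp [klDiv, h, InformationTheory.klDiv_of_ac_of_integrable h.1 h.2]
  · simp only [klDiv, if_neg h]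
    exact (InformationTheory.klDiv_eq_top_iff.mpr fun hab hint => h ⟨hab, hint⟩).symm

lemma klDiv_eq_zero_iff {a b : Measure Z} [IsProbabilityMeasure a] [IsProbabilityMeasure b] :
    klDiv a b = 0 ↔ a = b := by
  rw [klDiv_eq_informationTheory_klDiv_s1, InformationTheory.klDiv_eq_zero_iff]

lemma klDiv_eq_top_of_not_absolutelyContinuous {a b : Measure Z} (h : ¬ a ≪ b) :
    klDiv a b = ⊤ :=
  if_neg fun hab => h hab.1

lemma lintegral_ofReal_neg_llr_le {a b : Measure Z} [IsFiniteMeasure a] [IsFiniteMeasure b]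
    (hab : a ≪ b) : ∫⁻ z, ENNReal.ofReal (-llr a b z) ∂a ≤ b Set.univ := by
  refine le_trans (lintegral_mono_ae ?_) Measure.lintegral_rnDeriv_le
  filter_upwards [exp_neg_llr hab] with z hz
  calc ENNReal.ofReal (-llr a b z) ≤ ENNReal.ofReal (Real.exp (-llr a b z)) :=
        ENNReal.ofReal_le_ofReal ((Real.add_one_le_exp _).trans' (by linarith))
    _ = ENNReal.ofReal (b.rnDeriv a z).toReal := by rw [hz]
    _ ≤ b.rnDeriv a z := ENNReal.ofReal_toReal_le

lemma lintegral_ofReal_neg_llr_ne_top {a b : Measure Z} [IsFiniteMeasure a] [IsFiniteMeasure b]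
    (hab : a ≪ b) : ∫⁻ z, ENNReal.ofReal (-llr a b z) ∂a ≠ ⊤ :=
  ((lintegral_ofReal_neg_llr_le hab).trans_lt (measure_lt_top b _)).ne

lemma klDiv_add_lintegral_ofReal_neg_llr {a b : Measure Z} [IsProbabilityMeasure a]
    [IsProbabilityMeasure b] (hab : a ≪ b) :
    klDiv a b + ∫⁻ z, ENNReal.ofReal (-llr a b z) ∂a
      = ∫⁻ z, ENNReal.ofReal (llr a b z) ∂a := by
  have hneg := lintegral_ofReal_neg_llr_ne_top hab
  by_cases hint : Integrable (llr a b) a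
  · have hgibbs : 0 ≤ ∫ z, llr a b z ∂a := by
      simpa using InformationTheory.integral_llr_add_sub_measure_univ_nonneg hab hint
    have hpos := hint.lintegral_lt_top.ne
    rw [integral_eq_lintegral_pos_part_sub_lintegral_neg_part hint, sub_nonneg,
      ENNReal.toReal_le_toReal hneg hpos] at hgibbs
    rw [klDiv, if_pos ⟨hab, hint⟩, integral_eq_lintegral_pos_part_sub_lintegral_neg_part hint,
      ENNReal.ofReal_sub _ ENNReal.toReal_nonneg, ENNReal.ofReal_toReal hpos,
      ENNReal.ofReal_toReal hneg, tsub_add_cancel_of_le hgibbs]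
  · have hpos : ∫⁻ z, ENNReal.ofReal (llr a b z) ∂a = ⊤ := by
      by_contra hpos
      exact hint (integrable_of_lintegral_ofReal_ne_top_s1 (measurable_llr a b) hpos hneg)
    rw [hpos, klDiv, if_neg fun h => hint h.2, top_add]

lemma llr_ae_eq_llr_add_llr {a b c : Measure Z} [IsFiniteMeasure a] [IsFiniteMeasure b]
    [IsFiniteMeasure c] (hab : a ≪ b) (hbc : b ≪ c) :
    ∀ᵐ z ∂a, llr a c z = llr a b z + llr b c z := by
  have hac := hab.trans hbc
  filter_upwards [hac.ae_le (Measure.rnDeriv_mul_rnDeriv hab (κ := c)),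
    Measure.rnDeriv_pos hab, hab.ae_le (Measure.rnDeriv_pos hbc),
    hab.ae_le (Measure.rnDeriv_lt_top a b), hac.ae_le (Measure.rnDeriv_lt_top b c)]
    with z hmul hpos1 hpos2 hlt1 hlt2
  rw [llr, llr, llr, ← hmul, Pi.mul_apply, ENNReal.toReal_mul,
    Real.log_mul (ENNReal.toReal_ne_zero.mpr ⟨hpos1.ne', hlt1.ne⟩)
      (ENNReal.toReal_ne_zero.mpr ⟨hpos2.ne', hlt2.ne⟩)]

lemma klDiv_add_lintegral_ofReal_neg_llr_eq_klDiv_add {a b c : Measure Z}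
    [IsProbabilityMeasure a] [IsProbabilityMeasure b] [IsProbabilityMeasure c]
    (hab : a ≪ b) (hbc : b ≪ c) :
    klDiv a c + ∫⁻ z, ENNReal.ofReal (-llr b c z) ∂a
      = klDiv a b + ∫⁻ z, ENNReal.ofReal (llr b c z) ∂a := by
  have hac := hab.trans hbc
  have h := lintegral_ofReal_add_lintegral_ofReal_neg_of_ae_eq_add (measurable_llr a c)
    (measurable_llr a b) (llr_ae_eq_llr_add_llr hab hbc)
  rw [← klDiv_add_lintegral_ofReal_neg_llr hac, ← klDiv_add_lintegral_ofReal_neg_llr hab] at h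
  refine (ENNReal.add_left_inj (ENNReal.add_ne_top.2
    ⟨lintegral_ofReal_neg_llr_ne_top hac, lintegral_ofReal_neg_llr_ne_top hab⟩)).1 ?_
  convert h using 1 <;> ring

end GeneralKL

section AggregatePosterior

variable {X Z : Type*} [MeasurableSpace X] [MeasurableSpace Z]

lemma MeasureTheory.Measure.absolutelyContinuous_of_ae_rnDeriv_ne_zero {ν χ b : Measure Z}
    [SigmaFinite ν] [SigmaFinite χ] (hνχ : ν ≪ χ) (hbχ : b ≪ χ)
    (hb : ∀ᵐ z ∂b, ν.rnDeriv χ z ≠ 0) : b ≪ ν := by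
  set S := {z | ν.rnDeriv χ z ≠ 0}
  have hS : MeasurableSet S := (Measure.measurable_rnDeriv ν χ) (measurableSet_singleton 0).compl
  have h_density : χ.restrict S ≪ (χ.restrict S).withDensity (ν.rnDeriv χ) :=
    withDensity_absolutelyContinuous' (Measure.measurable_rnDeriv ν χ).aemeasurable
      (ae_restrict_mem hS)
  have h_restrict : (χ.restrict S).withDensity (ν.rnDeriv χ) ≪ ν := by
    rw [← restrict_withDensity hS, Measure.withDensity_rnDeriv_eq ν χ hνχ]
    exact Measure.restrict_le_self.absolutelyContinuous
  rw [← Measure.restrict_eq_self_of_ae_mem hb]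
  exact (hbχ.restrict S).trans (h_density.trans h_restrict)

-- `κ x ≪ μ.bind κ` can fail on a non-null set of `x` (take `κ x = δ x` with `μ` diffuse).
lemma ProbabilityTheory.Kernel.ae_absolutelyContinuous_bind {μ : Measure X} {κ : Kernel X Z}
    {p : Measure Z} [SigmaFinite (μ.bind κ)] [SigmaFinite p] (h : μ.bind κ ≪ p) :
    ∀ᵐ x ∂μ, κ x ≪ p → κ x ≪ μ.bind κ := by
  have hpos : ∀ᵐ z ∂(μ.bind κ), (μ.bind κ).rnDeriv p z ≠ 0 :=
    (Measure.rnDeriv_pos h).mono fun _ hz => hz.ne'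
  filter_upwards [Measure.ae_ae_of_ae_comp hpos] with x hx hxp
  exact Measure.absolutelyContinuous_of_ae_rnDeriv_ne_zero h hxp hx

lemma lintegral_klDiv_eq_top_of_not_absolutelyContinuous {μ : Measure X} {κ : Kernel X Z}
    {p : Measure Z} (h : ¬ μ.bind κ ≪ p) : ∫⁻ x, klDiv (κ x) p ∂μ = ⊤ := by
  obtain ⟨t, ht, hpt, hqt⟩ : ∃ t, MeasurableSet t ∧ p t = 0 ∧ μ.bind κ t ≠ 0 := by
    by_contra! hcon
    exact h (Measure.AbsolutelyContinuous.mk hcon)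
  rw [Measure.bind_apply ht κ.aemeasurable] at hqt
  refine top_le_iff.1 ?_
  calc ⊤ = (∫⁻ x, κ x t ∂μ) * ⊤ := (ENNReal.mul_top hqt).symm
    _ = ∫⁻ x, κ x t * ⊤ ∂μ := (lintegral_mul_const _ (κ.measurable_coe ht)).symm
    _ ≤ ∫⁻ x, klDiv (κ x) p ∂μ := lintegral_mono fun x => by
      by_cases hx : κ x t = 0
      · simp [hx]
      · rw [klDiv_eq_top_of_not_absolutelyContinuous fun hac => hx (hac hpt)]
        exact le_top

theorem lintegral_klDiv_eq_lintegral_klDiv_bind_add (μ : Measure X) [IsProbabilityMeasure μ]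
    (κ : Kernel X Z) [IsMarkovKernel κ] (p : Measure Z) [IsProbabilityMeasure p] :
    ∫⁻ x, klDiv (κ x) p ∂μ = ∫⁻ x, klDiv (κ x) (μ.bind κ) ∂μ + klDiv (μ.bind κ) p := by
  by_cases hqp : μ.bind κ ≪ p
  swap
  · rw [lintegral_klDiv_eq_top_of_not_absolutelyContinuous hqp,
      klDiv_eq_top_of_not_absolutelyContinuous hqp, add_top]
  set q := μ.bind κ
  have hpointwise : ∀ᵐ x ∂μ, klDiv (κ x) p + ∫⁻ z, ENNReal.ofReal (-llr q p z) ∂κ x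
      = klDiv (κ x) q + ∫⁻ z, ENNReal.ofReal (llr q p z) ∂κ x := by
    filter_upwards [Kernel.ae_absolutelyContinuous_bind hqp] with x hx
    by_cases hxp : κ x ≪ p
    · exact klDiv_add_lintegral_ofReal_neg_llr_eq_klDiv_add (hx hxp) hqp
    · rw [klDiv_eq_top_of_not_absolutelyContinuous hxp, top_add,
        klDiv_eq_top_of_not_absolutelyContinuous fun hxq => hxp (hxq.trans hqp), top_add]
  have h := lintegral_congr_ae hpointwise
  rw [lintegral_add_right _
      (Measurable.lintegral_kernel (f := fun z => ENNReal.ofReal (-llr q p z)) (by fun_prop)),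
    lintegral_add_right _ (Measurable.lintegral_kernel (by fun_prop)),
    ← Measure.lintegral_bind κ.aemeasurable (by fun_prop),
    ← Measure.lintegral_bind κ.aemeasurable (by fun_prop),
    ← klDiv_add_lintegral_ofReal_neg_llr hqp, ← add_assoc] at h
  exact (ENNReal.add_left_inj (lintegral_ofReal_neg_llr_ne_top hqp)).1 h

end AggregatePosterior

/-- If `∫ KL(κ x ‖ q_agg) dμ(x) < ∞` (with `q_agg = μ.bind κ`), then for every probability
measure `p` on `Z`: the average posterior-to-prior KL is minimized by `q_agg`, i.e.
`∫ KL(κ x ‖ p) dμ ≥ ∫ KL(κ x ‖ q_agg) dμ`, with equality iff `p = q_agg`, and the optimality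
gap for any other prior `p` equals `KL(q_agg ‖ p)`. -/
theorem aggregate_posterior_is_unique_optimal_prior {X Z : Type*}
    [MeasurableSpace X] [MeasurableSpace Z]
    (μ : Measure X) [IsProbabilityMeasure μ] (κ : ProbabilityTheory.Kernel X Z)
    [ProbabilityTheory.IsMarkovKernel κ]
    (hfin : ∫⁻ x, klDiv (κ x) (μ.bind κ) ∂μ < ⊤) :
    ∀ p : Measure Z, IsProbabilityMeasure p →
      (∫⁻ x, klDiv (κ x) (μ.bind κ) ∂μ ≤ ∫⁻ x, klDiv (κ x) p ∂μ) ∧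
      ((∫⁻ x, klDiv (κ x) p ∂μ = ∫⁻ x, klDiv (κ x) (μ.bind κ) ∂μ) ↔ p = μ.bind κ) ∧
      (∫⁻ x, klDiv (κ x) p ∂μ - ∫⁻ x, klDiv (κ x) (μ.bind κ) ∂μ = klDiv (μ.bind κ) p) := by
  intro p hp
  rw [lintegral_klDiv_eq_lintegral_klDiv_bind_add μ κ p]
  refine ⟨le_self_add, ?_, ENNReal.add_sub_cancel_left hfin.ne⟩
  simpa [eq_comm] using (ENNReal.add_right_inj hfin.ne (c := 0)).trans
    (klDiv_eq_zero_iff (a := μ.bind κ) (b := p))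
end

section
/- Let p0 be a probability measure on a measurable space Z and f : Z → ℝ measurable with Z_ψ := ∫ e^{−f} dp0 satisfying 0 < Z_ψ < ∞, and suppose f is integrable with respect to the energy-tilted prior p_ψ. Then the variational form of the log-normalizing constant holds: log Z_ψ = sup over probability measures q on Z with q ≪ p0, f ∈ L¹(q) and KL(q ‖ p0) < ∞ of the quantity (−∫ f dq − KL(q ‖ p0)), and the supremum is attained at q = p_ψ. -/
open MeasureTheory Real
open scoped ENNReal

/-- Nonnegativity of the KL integrand's integral (Gibbs' inequality core). -/
lemma integral_llr_nonneg_aux {Z : Type*} [MeasurableSpace Z] {q p : Measure Z}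
    [IsProbabilityMeasure q] [IsProbabilityMeasure p] (hqp : q ≪ p)
    (hint : Integrable (llr q p) q) : 0 ≤ ∫ z, llr q p z ∂q := by
  have hmeas : Measurable fun x => (q.rnDeriv p x)⁻¹ := (Measure.measurable_rnDeriv q p).inv
  have hlint : ∫⁻ x, (q.rnDeriv p x)⁻¹ ∂q ≤ 1 := by
    rw [← lintegral_rnDeriv_mul hqp hmeas.aemeasurable]
    calc ∫⁻ x, q.rnDeriv p x * (q.rnDeriv p x)⁻¹ ∂p
        ≤ ∫⁻ _, 1 ∂p := lintegral_mono fun x => ENNReal.mul_inv_le_one _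
      _ = 1 := by simp
  have hexp : (fun x => Real.exp (-llr q p x)) =ᵐ[q] fun x => ((q.rnDeriv p x)⁻¹).toReal := by
    filter_upwards [Measure.rnDeriv_pos hqp, hqp.ae_le (Measure.rnDeriv_lt_top q p)] with x hx hx'
    rw [llr, ← Real.log_inv, Real.exp_log, ENNReal.toReal_inv]
    rw [inv_pos, ENNReal.toReal_pos_iff]
    exact ⟨hx, hx'⟩
  have hintexp : Integrable (fun x => ((q.rnDeriv p x)⁻¹).toReal) q :=
    integrable_toReal_of_lintegral_ne_top hmeas.aemeasurable
      (lt_of_le_of_lt hlint ENNReal.one_lt_top).ne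
  have hIexp : ∫ x, ((q.rnDeriv p x)⁻¹).toReal ∂q ≤ 1 := by
    rw [integral_toReal hmeas.aemeasurable
      ((Measure.rnDeriv_pos hqp).mono fun x hx => ENNReal.inv_lt_top.2 hx)]
    exact ENNReal.toReal_le_of_le_ofReal one_pos.le (by simpa using hlint)
  have hintexp' : Integrable (fun x => Real.exp (-llr q p x)) q := hintexp.congr hexp.symm
  have key : ∫ x, -llr q p x ∂q ≤ 0 := by
    have h1 : ∫ x, -llr q p x ∂q ≤ ∫ x, (Real.exp (-llr q p x) - 1) ∂q := by
      refine integral_mono hint.neg (hintexp'.sub (integrable_const 1)) fun x => ?_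
      have := Real.add_one_le_exp (-llr q p x); linarith
    have h2 : ∫ x, (Real.exp (-llr q p x) - 1) ∂q = ∫ x, Real.exp (-llr q p x) ∂q - 1 := by
      rw [integral_sub hintexp' (integrable_const 1)]; simp
    have h3 : ∫ x, Real.exp (-llr q p x) ∂q ≤ 1 := by
      rw [integral_congr_ae hexp]; exact hIexp
    linarith
  rw [integral_neg] at key; linarith

/-- Variational form of the log-normalizing constant: `log Z_ψ` is the greatest value of
`−∫ f dq − KL(q ‖ p0)` over probability measures `q ≪ p0` with `f ∈ L¹(q)` and
`KL(q ‖ p0) < ⊤`, and the supremum is attained at the energy-tilted prior `p_ψ`. -/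
theorem log_normalizing_constant_variational_form {Z : Type*} [MeasurableSpace Z]
    (p0 : Measure Z) [IsProbabilityMeasure p0] (f : Z → ℝ) (hf : Measurable f)
    (hint : Integrable (fun z => Real.exp (-f z)) p0)
    (hpos : 0 < ∫ z, Real.exp (-f z) ∂p0)
    (hfψ : Integrable f (p0.tilted (fun z => -f z))) :
    IsGreatest
      {v : ℝ | ∃ q : Measure Z, IsProbabilityMeasure q ∧ q ≪ p0 ∧ Integrable f q ∧
        klDiv q p0 < ⊤ ∧ v = -∫ z, f z ∂q - (klDiv q p0).toReal}
      (Real.log (∫ z, Real.exp (-f z) ∂p0)) ∧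
    -∫ z, f z ∂(p0.tilted (fun z => -f z)) -
        (klDiv (p0.tilted (fun z => -f z)) p0).toReal =
      Real.log (∫ z, Real.exp (-f z) ∂p0) := by
  classical
  set pψ := p0.tilted (fun z => -f z) with hpψ
  haveI hprob : IsProbabilityMeasure pψ := isProbabilityMeasure_tilted hint
  have hac : pψ ≪ p0 := tilted_absolutelyContinuous p0 _
  have hac' : p0 ≪ pψ := absolutelyContinuous_tilted hint
  set L : ℝ := Real.log (∫ z, Real.exp (-f z) ∂p0) with hL
  -- llr pψ p0 a.e. equals -f - L
  have hllr : llr pψ p0 =ᵐ[pψ] fun x => -f x - L := by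
    have h0 : llr p0 p0 =ᵐ[p0] fun _ => (0 : ℝ) := by
      filter_upwards [Measure.rnDeriv_self p0] with x hx
      simp [llr, hx]
    have h1 : llr pψ p0 =ᵐ[p0] fun x => -f x - L + llr p0 p0 x :=
      llr_tilted_left Measure.AbsolutelyContinuous.rfl hint hf.neg.aemeasurable
    have h2 : llr pψ p0 =ᵐ[p0] fun x => -f x - L := by
      filter_upwards [h0, h1] with x hx0 hx1
      rw [hx1, hx0, add_zero]
    exact hac h2
  have hillr : Integrable (llr pψ p0) pψ :=
    (Integrable.congr (by exact (hfψ.neg.sub (integrable_const L))) hllr.symm)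
  have hfneg : Integrable (fun z => -f z) pψ := hfψ.neg
  have hIllr : ∫ x, llr pψ p0 x ∂pψ = -∫ z, f z ∂pψ - L := by
    rw [integral_congr_ae hllr, integral_sub hfneg (integrable_const L),
      integral_neg, integral_const]
    simp
  have hnn : 0 ≤ ∫ x, llr pψ p0 x ∂pψ := integral_llr_nonneg_aux hac hillr
  have hklψ : klDiv pψ p0 = ENNReal.ofReal (-∫ z, f z ∂pψ - L) := by
    rw [klDiv, if_pos ⟨hac, hillr⟩, hIllr]
  have hattain : -∫ z, f z ∂pψ - (klDiv pψ p0).toReal = L := by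
    rw [hklψ, ENNReal.toReal_ofReal (hIllr ▸ hnn)]
    ring
  refine ⟨⟨⟨pψ, hprob, hac, hfψ, ?_, hattain ▸ rfl⟩, ?_⟩, hattain⟩
  · rw [hklψ]; exact ENNReal.ofReal_lt_top
  · rintro v ⟨q, hq, hqp, hfq, hklt, hv⟩
    have hcond : q ≪ p0 ∧ Integrable (llr q p0) q := by
      by_contra h
      rw [klDiv, if_neg h] at hklt
      exact absurd hklt (lt_irrefl _)
    have hkl : klDiv q p0 = ENNReal.ofReal (∫ z, llr q p0 z ∂q) := by
      rw [klDiv, if_pos hcond]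
    have hnnq : 0 ≤ ∫ z, llr q p0 z ∂q := integral_llr_nonneg_aux hcond.1 hcond.2
    have hvv : v = -∫ z, f z ∂q - ∫ z, llr q p0 z ∂q := by
      rw [hv, hkl, ENNReal.toReal_ofReal hnnq]
    -- Gibbs: 0 ≤ ∫ llr q pψ dq
    have hqψ : q ≪ pψ := hqp.trans hac'
    have hillrq : Integrable (llr q pψ) q :=
      integrable_llr_tilted_right hqp hfq.neg hcond.2 hint
    have hIq : ∫ x, llr q pψ x ∂q
        = ∫ x, llr q p0 x ∂q - ∫ x, -f x ∂q + L :=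
      integral_llr_tilted_right hqp hfq.neg hint hcond.2
    have hnnψ : 0 ≤ ∫ x, llr q pψ x ∂q := integral_llr_nonneg_aux hqψ hillrq
    rw [hIq, integral_neg] at hnnψ
    rw [hvv]
    linarith
end

section
/- Let p0, f, Z_ψ, p_ψ be as in the energy-tilted setup, let q be a probability measure on Z with q ≪ p0, f ∈ L¹(q), KL(q ‖ p0) < ∞, and let r : Z → ℝ be q-integrable. Define 𝓛 := ∫ r dq − KL(q ‖ p0), 𝓛' := ∫ r dq − KL(q ‖ p_ψ), and for any probability measure p_g on Z with p_g ≪ p0, f ∈ L¹(p_g) and KL(p_g ‖ p0) < ∞, define the EVaLP upper bound 𝓛^up(p_g) := 𝓛 − ∫ f dq + ∫ f dp_g + KL(p_g ‖ p0). Then 𝓛' ≤ 𝓛^up(p_g) for every such p_g, and if f ∈ L¹(p_ψ) then equality holds at p_g = p_ψ. -/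
/-!
Both divergences are differences of integrals of log-densities, and tilting `p0` by `-f`
shifts the log-density by `f + log Z_ψ`:
`KL(μ ‖ p_ψ) = KL(μ ‖ p0) + ∫ f dμ + log Z_ψ` for every `μ` with `KL(μ ‖ p0) < ∞`.
Applied to `q` this gives `𝓛' = 𝓛 - ∫ f dq - log Z_ψ`, and applied to `p_g` it gives
`𝓛^up(p_g) = 𝓛 - ∫ f dq - log Z_ψ + KL(p_g ‖ p_ψ)`, so the gap is `KL(p_g ‖ p_ψ) ≥ 0`,
which vanishes at `p_g = p_ψ`.
-/

open MeasureTheory Real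
open scoped ENNReal

section

variable {Z : Type*} [MeasurableSpace Z] {μ ν : Measure Z}

/-- Mathlib's divergence carries the extra term `ν univ - μ univ`, which vanishes here. -/
lemma klDiv_eq_informationTheory_klDiv_s7 [IsProbabilityMeasure μ] [IsProbabilityMeasure ν] :
    klDiv μ ν = InformationTheory.klDiv μ ν := by
  simp [klDiv, InformationTheory.klDiv_def]

lemma toReal_klDiv_tilted_right [IsProbabilityMeasure μ] [IsProbabilityMeasure ν] {g : Z → ℝ}
    (hμν : klDiv μ ν ≠ ⊤) (hgμ : Integrable g μ) (hgν : Integrable (fun z => exp (g z)) ν) :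
    (klDiv μ (ν.tilted g)).toReal =
      (klDiv μ ν).toReal - ∫ z, g z ∂μ + log (∫ z, exp (g z) ∂ν) := by
  have := isProbabilityMeasure_tilted hgν
  rw [klDiv_eq_informationTheory_klDiv_s7] at hμν ⊢
  rw [klDiv_eq_informationTheory_klDiv_s7]
  obtain ⟨hac, hllr⟩ := InformationTheory.klDiv_ne_top_iff.mp hμν
  rw [InformationTheory.toReal_klDiv_of_measure_eq (hac.trans (absolutelyContinuous_tilted hgν))
      (by simp), InformationTheory.toReal_klDiv_of_measure_eq hac (by simp),
    integral_llr_tilted_right hac hgμ hgν hllr]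

lemma toReal_klDiv_tilted_left_self [IsProbabilityMeasure ν] {g : Z → ℝ}
    (hgν : Integrable (fun z => exp (g z)) ν) (hg : Integrable g (ν.tilted g)) :
    (klDiv (ν.tilted g) ν).toReal = ∫ z, g z ∂(ν.tilted g) - log (∫ z, exp (g z) ∂ν) := by
  have := isProbabilityMeasure_tilted hgν
  have hllr : llr (ν.tilted g) ν =ᵐ[ν.tilted g] fun z => g z - log (∫ z, exp (g z) ∂ν) :=
    (tilted_absolutelyContinuous ν g).ae_le (log_rnDeriv_tilted_left_self hgν)
  rw [klDiv_eq_informationTheory_klDiv_s7,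
    InformationTheory.toReal_klDiv_of_measure_eq (tilted_absolutelyContinuous ν g) (by simp),
    integral_congr_ae hllr, integral_sub hg (integrable_const _)]
  simp

end

theorem extended_elbo_le_evalp_upper_bound_general {Z : Type*} [MeasurableSpace Z]
    (p0 : Measure Z) [IsProbabilityMeasure p0] (f : Z → ℝ)
    (hint : Integrable (fun z => Real.exp (-f z)) p0)
    (q : Measure Z) [IsProbabilityMeasure q]
    (hfq : Integrable f q) (hkl : klDiv q p0 < ⊤)
    (r : Z → ℝ) :
    (∀ pg : Measure Z, IsProbabilityMeasure pg → pg ≪ p0 → Integrable f pg →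
        klDiv pg p0 < ⊤ →
      ∫ z, r z ∂q - (klDiv q (p0.tilted (fun z => -f z))).toReal ≤
        (∫ z, r z ∂q - (klDiv q p0).toReal) - ∫ z, f z ∂q + ∫ z, f z ∂pg +
          (klDiv pg p0).toReal) ∧
    (Integrable f (p0.tilted (fun z => -f z)) →
      ∫ z, r z ∂q - (klDiv q (p0.tilted (fun z => -f z))).toReal =
        (∫ z, r z ∂q - (klDiv q p0).toReal) - ∫ z, f z ∂q +
          ∫ z, f z ∂(p0.tilted (fun z => -f z)) +
          (klDiv (p0.tilted (fun z => -f z)) p0).toReal) := by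
  have hq := toReal_klDiv_tilted_right (g := fun z => -f z) hkl.ne hfq.neg hint
  rw [integral_neg] at hq
  refine ⟨fun pg _ _ hfpg hklpg => ?_, fun hfψ => ?_⟩
  · have hpg := toReal_klDiv_tilted_right (g := fun z => -f z) hklpg.ne hfpg.neg hint
    rw [integral_neg] at hpg
    have := ENNReal.toReal_nonneg (a := klDiv pg (p0.tilted fun z => -f z))
    linarith
  · have hψ := toReal_klDiv_tilted_left_self (g := fun z => -f z) hint hfψ.neg
    rw [integral_neg] at hψ
    linarith

/-- EVaLP upper bound: with `p_ψ = (1/Z_ψ) e^{−f} p0`, `𝓛 = ∫ r dq − KL(q ‖ p0)`,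
`𝓛' = ∫ r dq − KL(q ‖ p_ψ)` and, for a sampler distribution `p_g`,
`𝓛^up(p_g) = 𝓛 − ∫ f dq + ∫ f dp_g + KL(p_g ‖ p0)`, one has `𝓛' ≤ 𝓛^up(p_g)` for every
probability measure `p_g ≪ p0` with `f ∈ L¹(p_g)` and `KL(p_g ‖ p0) < ∞`; if moreover
`f ∈ L¹(p_ψ)`, equality holds at `p_g = p_ψ`. -/
theorem extended_elbo_le_evalp_upper_bound {Z : Type*} [MeasurableSpace Z]
    (p0 : Measure Z) [IsProbabilityMeasure p0] (f : Z → ℝ) (hf : Measurable f)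
    (hint : Integrable (fun z => Real.exp (-f z)) p0)
    (hpos : 0 < ∫ z, Real.exp (-f z) ∂p0)
    (q : Measure Z) [IsProbabilityMeasure q] (hac : q ≪ p0)
    (hfq : Integrable f q) (hkl : klDiv q p0 < ⊤)
    (r : Z → ℝ) (hr : Integrable r q) :
    (∀ pg : Measure Z, IsProbabilityMeasure pg → pg ≪ p0 → Integrable f pg →
        klDiv pg p0 < ⊤ →
      ∫ z, r z ∂q - (klDiv q (p0.tilted (fun z => -f z))).toReal ≤
        (∫ z, r z ∂q - (klDiv q p0).toReal) - ∫ z, f z ∂q + ∫ z, f z ∂pg +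
          (klDiv pg p0).toReal) ∧
    (Integrable f (p0.tilted (fun z => -f z)) →
      ∫ z, r z ∂q - (klDiv q (p0.tilted (fun z => -f z))).toReal =
        (∫ z, r z ∂q - (klDiv q p0).toReal) - ∫ z, f z ∂q +
          ∫ z, f z ∂(p0.tilted (fun z => -f z)) +
          (klDiv (p0.tilted (fun z => -f z)) p0).toReal) :=
  extended_elbo_le_evalp_upper_bound_general p0 f hint q hfq hkl r
end
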